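/- Under the corrector transformation law φ_{Rξ}(A; Rx) = φ_ξ(R^T A(R·)R; x), the approximate homogenized matrix satisfies the equivariance property \bar{A}_L(A) Rξ = R \bar{A}_L(R^T A(R·)R) ξ for every ξ ∈ ℝ^d and every orthogonal R leaving the torus invariant. -/

import Mathlib

open MeasureTheory
open scoped RealInnerProductSpace

/-!
Substituting `x ↦ R x` in `∫_Ω A(Rξ + ∇u)` turns it into `∫_Ω A(Rx)(Rξ + ∇u(Rx))`, since `R`
preserves Lebesgue measure and `R⁻¹Ω = Ω`. Differentiating the transformation law `u ∘ R = v` in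
the interior of `Ω` gives `∇u(Rx) = R ∇v(x)`, and the boundary of the convex set `Ω` is a null set.
Hence the integrand is `A(Rx) R(ξ + ∇v(x)) = R (Rᵀ A(Rx) R (ξ + ∇v(x)))`, and `R` commutes with
the integral.
-/

section Gradient

variable {E F : Type*} [NormedAddCommGroup E] [InnerProductSpace ℝ E] [CompleteSpace E]
  [NormedAddCommGroup F] [InnerProductSpace ℝ F] [CompleteSpace F]

theorem gradient_comp_linearIsometryEquiv (R : E ≃ₗᵢ[ℝ] F) (f : F → ℝ) (x : E) :
    gradient (f ∘ R) x = R.symm (gradient f (R x)) := by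
  refine ext_inner_right ℝ fun w => ?_
  have hderiv : fderiv ℝ (f ∘ R) x =
      (fderiv ℝ f (R x)).comp (R.toContinuousLinearEquiv : E →L[ℝ] F) := by
    simpa using R.toContinuousLinearEquiv.comp_right_fderiv (f := f) (x := x)
  rw [inner_gradient_left, hderiv, ← R.inner_map_map, R.apply_symm_apply, inner_gradient_left]
  rfl

theorem gradient_apply_eq_of_eqOn_comp (R : E ≃ₗᵢ[ℝ] F) {u : F → ℝ} {v : E → ℝ} {U : Set E}
    (hU : IsOpen U) (huv : Set.EqOn (u ∘ R) v U) {x : E} (hx : x ∈ U) :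
    gradient u (R x) = R (gradient v x) := by
  have hloc : v =ᶠ[nhds x] u ∘ R :=
    Filter.eventuallyEq_of_mem (hU.mem_nhds hx) fun y hy => (huv hy).symm
  rw [hloc.gradient_eq, gradient_comp_linearIsometryEquiv, R.apply_symm_apply]

end Gradient

theorem setIntegral_comp_linearIsometryEquiv {E G : Type*} [NormedAddCommGroup E]
    [InnerProductSpace ℝ E] [FiniteDimensional ℝ E] [MeasurableSpace E] [BorelSpace E]
    [NormedAddCommGroup G] [NormedSpace ℝ G]
    (R : E ≃ₗᵢ[ℝ] E) {s : Set E} (hs : R ⁻¹' s = s) (f : E → G) :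
    ∫ x in s, f (R x) = ∫ x in s, f x := by
  rw [← R.measurePreserving.setIntegral_preimage_emb R.toHomeomorph.measurableEmbedding f s, hs]

theorem stmt10_general {d : ℕ} (L : ℝ)
    (Ω : Set (EuclideanSpace ℝ (Fin d)))
    (hΩ : Ω = WithLp.ofLp ⁻¹' (Set.univ.pi fun _ : Fin d => Set.Ico (0 : ℝ) L))
    (R : EuclideanSpace ℝ (Fin d) ≃ₗᵢ[ℝ] EuclideanSpace ℝ (Fin d))
    (hRΩ : (fun x => R x) '' Ω = Ω)
    (A : EuclideanSpace ℝ (Fin d) → (EuclideanSpace ℝ (Fin d) →L[ℝ] EuclideanSpace ℝ (Fin d)))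
    (ξ : EuclideanSpace ℝ (Fin d))
    (u v : EuclideanSpace ℝ (Fin d) → ℝ)
    -- the corrector transformation law φ_{Rξ}(A; Rx) = φ_ξ(Rᵀ A(R·)R; x)
    (htrans : ∀ x ∈ Ω, u (R x) = v x) :
    (∫ x in Ω, A x (R ξ + gradient u x)) =
      R (∫ x in Ω, R.symm (A (R x) (R (ξ + gradient v x)))) := by
  have hRΩ' : R ⁻¹' Ω = Ω := by
    conv_lhs => rw [← hRΩ]
    exact Set.preimage_image_eq Ω R.injective
  have hconv : Convex ℝ Ω := hΩ ▸ (convex_pi fun _ _ => convex_Ico 0 L).linear_preimage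
    (WithLp.linearEquiv 2 ℝ (Fin d → ℝ)).toLinearMap
  have hint : interior Ω =ᵐ[volume] Ω :=
    interior_ae_eq_of_null_frontier (hconv.addHaar_frontier volume)
  have hgrad : ∀ x ∈ interior Ω, gradient u (R x) = R (gradient v x) := fun x =>
    gradient_apply_eq_of_eqOn_comp R isOpen_interior fun y hy => htrans y (interior_subset hy)
  calc (∫ x in Ω, A x (R ξ + gradient u x))
      = ∫ x in interior Ω, A (R x) (R ξ + gradient u (R x)) := by
        rw [← setIntegral_comp_linearIsometryEquiv R hRΩ', setIntegral_congr_set hint]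
    _ = ∫ x in Ω, A (R x) (R (ξ + gradient v x)) := by
        rw [← setIntegral_congr_set hint]
        refine setIntegral_congr_fun isOpen_interior.measurableSet fun x hx => ?_
        rw [hgrad x hx, map_add R]
    _ = R (∫ x in Ω, R.symm (A (R x) (R (ξ + gradient v x)))) := by
        simpa only [LinearIsometryEquiv.coe_toLinearIsometry, LinearIsometryEquiv.apply_symm_apply]
          using R.toLinearIsometry.integral_comp_comm
            fun x => R.symm (A (R x) (R (ξ + gradient v x)))

/-- Under the corrector transformation law `φ_{Rξ}(A; Rx) = φ_ξ(Rᵀ A(R·)R; x)`,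
the approximate homogenized matrix satisfies the equivariance property
`\bar A_L(A) Rξ = R \bar A_L(Rᵀ A(R·) R) ξ`. -/
theorem stmt10 {d : ℕ} (L : ℝ) (hL : 0 < L) (α β : ℝ) (hα : 0 < α) (hαβ : α ≤ β)
    (Ω : Set (EuclideanSpace ℝ (Fin d)))
    (hΩ : Ω = WithLp.ofLp ⁻¹' (Set.univ.pi fun _ : Fin d => Set.Ico (0 : ℝ) L))
    (R : EuclideanSpace ℝ (Fin d) ≃ₗᵢ[ℝ] EuclideanSpace ℝ (Fin d))
    (hRΩ : (fun x => R x) '' Ω = Ω)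
    (A : EuclideanSpace ℝ (Fin d) → (EuclideanSpace ℝ (Fin d) →L[ℝ] EuclideanSpace ℝ (Fin d)))
    (hAsym : ∀ x u w, ⟪A x u, w⟫ = ⟪u, A x w⟫)
    (hAell : ∀ x w, α * ‖w‖ ^ 2 ≤ ⟪A x w, w⟫ ∧ ⟪A x w, w⟫ ≤ β * ‖w‖ ^ 2)
    (X : Submodule ℝ (EuclideanSpace ℝ (Fin d) → ℝ)) (hX : FiniteDimensional ℝ X)
    (hXR : ∀ ψ ∈ X, (fun x => ψ (R x)) ∈ X)
    (ξ : EuclideanSpace ℝ (Fin d))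
    (u v : EuclideanSpace ℝ (Fin d) → ℝ) (hu : u ∈ X) (hv : v ∈ X)
    (hGalu : ∀ ψ ∈ X, ∫ x in Ω, ⟪gradient ψ x, A x (R ξ + gradient u x)⟫ = 0)
    (hGalv : ∀ ψ ∈ X,
      ∫ x in Ω, ⟪gradient ψ x, R.symm (A (R x) (R (ξ + gradient v x)))⟫ = 0)
    -- the corrector transformation law φ_{Rξ}(A; Rx) = φ_ξ(Rᵀ A(R·)R; x)
    (htrans : ∀ x ∈ Ω, u (R x) = v x)
    (hIntu : IntegrableOn (fun x => A x (R ξ + gradient u x)) Ω volume)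
    (hIntv : IntegrableOn
      (fun x => R.symm (A (R x) (R (ξ + gradient v x)))) Ω volume) :
    (∫ x in Ω, A x (R ξ + gradient u x)) =
      R (∫ x in Ω, R.symm (A (R x) (R (ξ + gradient v x)))) :=
  stmt10_general L Ω hΩ R hRΩ A ξ u v htrans
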